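/- arXiv:0902.1937 — 3 statements merged into one kernel-verified Lean document; each statement's English description precedes it below -/
import Mathlib

section
/- Let Ẑ and Z be self-adjoint complex L×L matrices and let z ∈ ℂ with Im z > 0. Then the matrix A^{z̄}_N + Z C^{z̄}_N − B^{z̄}_N Ẑ − Z D^{z̄}_N Ẑ (where z̄ is the complex conjugate of z) is invertible and the Green matrix satisfies G^z_N(Ẑ,Z) = ( [A^{z̄}_N + Z C^{z̄}_N − B^{z̄}_N Ẑ − Z D^{z̄}_N Ẑ]^{-1} [B^{z̄}_N + Z D^{z̄}_N] )^*. -/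
/-!
Put `w = z̄`, `M = A + Z C - B Ẑ - Z D Ẑ` and `K = B + Z D` (transfer blocks at `w`). For `L × κ`
matrices `X`, `R`, the lower blocks `ψ n` of `𝒯^w(n,0) [X; -R - Ẑ X]` solve the three-term
recurrence `T_n^* ψ (n-1) + (V_n - w) ψ n + T_{n+1} ψ (n+1) = 0` with `ψ 1 = X`. The left initial
value makes the first row of `(H - w) ψ` equal to `R`, and when `M X = K R` the upper block at `N`
equals `-Z ψ N`, which absorbs the right boundary. Hence `(H - w) ψ = π₁ R`, and since `H` is
Hermitian and `Im w ≠ 0`, `X = G^w R` whenever `M X = K R`. With `R = 0` this says `M` is injective;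
with `R = 1`, `X = M⁻¹ K` it gives `G^w = M⁻¹ K`, and `G^z = (G^w)^*` because `H` is Hermitian.
-/

open MeasureTheory Matrix
open scoped ComplexOrder

noncomputable section

/-- The space of complex `L × L` matrices. -/
abbrev Mat (L : ℕ) := Matrix (Fin L) (Fin L) ℂ

/-- The `2L × 2L` transfer matrix `[[(z − V)T⁻¹, −T^*], [T⁻¹, 0]]`. -/
def transferM (L : ℕ) (z : ℂ) (T V : Mat L) : Matrix (Fin L ⊕ Fin L) (Fin L ⊕ Fin L) ℂ :=
  Matrix.fromBlocks ((z • (1 : Mat L) - V) * T⁻¹) (-(Tᴴ)) T⁻¹ 0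

/-- The transfer matrix across the sample, `𝒯^z(N,0) = 𝒯_N^z ⋯ 𝒯_1^z`. -/
def transferProd (L N : ℕ) (T V : ℕ → Mat L) (z : ℂ) :
    Matrix (Fin L ⊕ Fin L) (Fin L ⊕ Fin L) ℂ :=
  (((List.range N).map (fun n => transferM L z (T (n + 1)) (V (n + 1)))).reverse).prod

def blockA (L N : ℕ) (T V : ℕ → Mat L) (z : ℂ) : Mat L := (transferProd L N T V z).toBlocks₁₁
def blockB (L N : ℕ) (T V : ℕ → Mat L) (z : ℂ) : Mat L := (transferProd L N T V z).toBlocks₁₂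
def blockC (L N : ℕ) (T V : ℕ → Mat L) (z : ℂ) : Mat L := (transferProd L N T V z).toBlocks₂₁
def blockD (L N : ℕ) (T V : ℕ → Mat L) (z : ℂ) : Mat L := (transferProd L N T V z).toBlocks₂₂

/-- The block tridiagonal Jacobi matrix `H^N_{Ẑ,Z}` (sites `1,…,N` are indexed by `Fin N`). -/
def jacobi (L N : ℕ) (T V : ℕ → Mat L) (Zh Z : Mat L) :
    Matrix (Fin N × Fin L) (Fin N × Fin L) ℂ :=
  Matrix.of fun p q =>
    if p.1 = q.1 then
      (V (p.1.val + 1) - (if p.1.val = 0 then Zh else 0)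
        - (if p.1.val = N - 1 then Z else 0)) p.2 q.2
    else if q.1.val = p.1.val + 1 then T (p.1.val + 2) p.2 q.2
    else if p.1.val = q.1.val + 1 then (T (q.1.val + 2))ᴴ p.2 q.2
    else 0

/-- The Green matrix `G^z_N(Ẑ,Z) = π₁^* (H^N_{Ẑ,Z} − z)⁻¹ π₁`. -/
def green (L N : ℕ) (hN : 0 < N) (T V : ℕ → Mat L) (Zh Z : Mat L) (z : ℂ) : Mat L :=
  Matrix.of fun i j => (jacobi L N T V Zh Z - z • 1)⁻¹ (⟨0, hN⟩, i) (⟨0, hN⟩, j)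

lemma Matrix.IsHermitian.isUnit_sub_smul_one {𝕜 n : Type*} [RCLike 𝕜] [Fintype n] [DecidableEq n]
    {A : Matrix n n 𝕜} (hA : A.IsHermitian) {c : 𝕜} (hc : RCLike.im c ≠ 0) :
    IsUnit (A - c • 1) := by
  have hc : c ∉ spectrum 𝕜 A := by
    rw [hA.spectrum_eq_image_range]
    rintro ⟨t, -, rfl⟩
    simp at hc
  rw [spectrum.notMem_iff, Algebra.algebraMap_eq_smul_one] at hc
  simpa using hc.neg

lemma Matrix.isUnit_of_mulVec_eq_zero {K n : Type*} [Field K] [Fintype n] [DecidableEq n]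
    {M : Matrix n n K} (h : ∀ v, M *ᵥ v = 0 → v = 0) : IsUnit M :=
  mulVec_injective_iff_isUnit.1 (LinearMap.ker_eq_bot.1 (ker_mulVecLin_eq_bot_iff.2 h))

lemma Fin.sum_ite_val_eq {α : Type*} [AddCommMonoid α] {N : ℕ} (c : ℕ) (f : α) :
    ∑ q : Fin N, (if (q : ℕ) = c then f else 0) = if c < N then f else 0 := by
  rw [Fin.sum_univ_eq_sum_range (fun q => if q = c then f else 0), Finset.sum_ite_eq']
  simp

lemma Fin.sum_ite_val_add_one_eq {α : Type*} [AddCommMonoid α] {N : ℕ} (c : ℕ) (f : α) :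
    ∑ q : Fin N, (if (q : ℕ) + 1 = c then f else 0) = if 0 < c ∧ c ≤ N then f else 0 := by
  cases c with
  | zero => simp
  | succ c => simpa [Nat.add_one_le_iff] using Fin.sum_ite_val_eq c f

namespace Matrix

variable {ι ι' m n κ α : Type*} [Fintype ι] [Fintype n] [NonUnitalNonAssocSemiring α]

def blockCol (ψ : ι → Matrix m κ α) : Matrix (ι × m) κ α := of fun x j => ψ x.1 x.2 j

lemma mul_blockCol_apply (A : Matrix (ι' × m) (ι × n) α) (ψ : ι → Matrix n κ α)
    (p : ι') (i : m) (j : κ) :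
    (A * blockCol ψ) (p, i) j = (∑ q, (comp ι' ι m n α).symm A p q * ψ q) i j := by
  simp [mul_apply, Fintype.sum_prod_type, Matrix.sum_apply, blockCol]

end Matrix

section Jacobi

variable {L N : ℕ} (T V : ℕ → Mat L) (Zh Z : Mat L) (w : ℂ)

lemma jacobi_isHermitian (hV : ∀ n, 1 ≤ n → n ≤ N → (V n).IsHermitian)
    (hZh : Zh.IsHermitian) (hZ : Z.IsHermitian) : (jacobi L N T V Zh Z).IsHermitian := by
  refine IsHermitian.ext fun ⟨p, i⟩ ⟨q, k⟩ => ?_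
  simp only [jacobi, of_apply]
  rcases eq_or_ne p q with rfl | hpq
  · have hD : (V (p + 1) - (if (p : ℕ) = 0 then Zh else 0)
        - (if (p : ℕ) = N - 1 then Z else 0)).IsHermitian := by
      refine ((hV _ (Nat.le_add_left 1 _) p.isLt).sub ?_).sub ?_ <;> split_ifs <;>
        simp [*]
    simpa using congrFun₂ hD.eq i k
  · have hqp : q ≠ p := hpq.symm
    simp only [hpq, hqp, if_false]
    split_ifs <;> first | omega | simp

lemma comp_symm_jacobi_sub_smul (p q : Fin N) :
    (comp (Fin N) (Fin N) (Fin L) (Fin L) ℂ).symm (jacobi L N T V Zh Z - w • 1) p q =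
      if p = q then
        V (p + 1) - (if (p : ℕ) = 0 then Zh else 0) - (if (p : ℕ) = N - 1 then Z else 0) - w • 1
      else if (q : ℕ) = p + 1 then T (p + 2)
      else if (p : ℕ) = q + 1 then (T (q + 2))ᴴ
      else 0 := by
  ext i k
  rcases eq_or_ne p q with rfl | hpq
  · simp [jacobi, one_apply]
  · simp [jacobi, one_apply, hpq]
    split_ifs <;> simp_all

/- Site `q + 1` carries the block `ψ (q + 1)`; at the two ends, `Ẑ` and `Z` take the place of the
missing neighbour terms `T₁^* ψ 0` and `T_{N+1} ψ (N + 1)`. -/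
lemma sum_comp_symm_jacobi_sub_smul_mul {κ : Type*} (ψ : ℕ → Matrix (Fin L) κ ℂ) (p : Fin N) :
    ∑ q : Fin N, (comp (Fin N) (Fin N) (Fin L) (Fin L) ℂ).symm (jacobi L N T V Zh Z - w • 1) p q
        * ψ (q + 1) =
      (if (p : ℕ) = 0 then -(Zh * ψ 1) else (T (p + 1))ᴴ * ψ p) + (V (p + 1) - w • 1) * ψ (p + 1)
        + (if (p : ℕ) + 1 = N then -(Z * ψ N) else T (p + 2) * ψ (p + 2)) := by
  have hsplit : ∀ q : Fin N,
      (comp (Fin N) (Fin N) (Fin L) (Fin L) ℂ).symm (jacobi L N T V Zh Z - w • 1) p q * ψ (q + 1) =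
        (if (q : ℕ) = p then (V (p + 1) - (if (p : ℕ) = 0 then Zh else 0)
            - (if (p : ℕ) = N - 1 then Z else 0) - w • 1) * ψ (p + 1) else 0)
        + (if (q : ℕ) = p + 1 then T (p + 2) * ψ (p + 2) else 0)
        + (if (q : ℕ) + 1 = p then (T (p + 1))ᴴ * ψ p else 0) := by
    intro q
    rw [comp_symm_jacobi_sub_smul]
    by_cases h₀ : (q : ℕ) = p
    · obtain rfl : q = p := Fin.ext h₀
      simp
    have hpq : p ≠ q := fun h => h₀ (h ▸ rfl)
    by_cases h₁ : (q : ℕ) = p + 1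
    · simp [hpq, h₁, add_assoc]
    by_cases h₂ : (q : ℕ) + 1 = p
    · simp [hpq, ← h₂, add_assoc]
    · simp [hpq, h₀, h₁, h₂, Ne.symm h₂]
  rw [Finset.sum_congr rfl fun q _ => hsplit q]
  simp only [Finset.sum_add_distrib, Fin.sum_ite_val_eq, Fin.sum_ite_val_add_one_eq, p.isLt]
  have hlast : (p : ℕ) = N - 1 ↔ (p : ℕ) + 1 = N := by omega
  simp only [if_true, hlast]
  clear hsplit hlast
  split_ifs <;> first | omega | (simp_all only [zero_add, sub_zero, add_zero, Matrix.sub_mul]; abel)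

end Jacobi

section Transfer

variable {L : ℕ} (T V : ℕ → Mat L) (w : ℂ)

lemma transferProd_zero : transferProd L 0 T V w = 1 := rfl

lemma transferProd_succ (n : ℕ) :
    transferProd L (n + 1) T V w =
      transferM L w (T (n + 1)) (V (n + 1)) * transferProd L n T V w := by
  simp [transferProd, List.range_succ]

variable {κ : Type*} (a b : Matrix (Fin L) κ ℂ)

def transferTop (n : ℕ) : Matrix (Fin L) κ ℂ := (transferProd L n T V w * fromRows a b).toRows₁

def transferBot (n : ℕ) : Matrix (Fin L) κ ℂ := (transferProd L n T V w * fromRows a b).toRows₂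

lemma transferTop_zero : transferTop T V w a b 0 = a := by
  simp [transferTop, transferProd_zero]

lemma transferBot_zero : transferBot T V w a b 0 = b := by
  simp [transferBot, transferProd_zero]

lemma transferProd_succ_mul_fromRows (n : ℕ) :
    transferProd L (n + 1) T V w * fromRows a b =
      fromRows ((w • 1 - V (n + 1)) * (T (n + 1))⁻¹ * transferTop T V w a b n
          - (T (n + 1))ᴴ * transferBot T V w a b n)
        ((T (n + 1))⁻¹ * transferTop T V w a b n) := by
  rw [transferProd_succ, Matrix.mul_assoc, ← fromRows_toRows (transferProd L n T V w * _),
    transferM, fromBlocks_mul_fromRows]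
  simp [transferTop, transferBot, sub_eq_add_neg]

lemma transferTop_succ (n : ℕ) :
    transferTop T V w a b (n + 1) = (w • 1 - V (n + 1)) * (T (n + 1))⁻¹ * transferTop T V w a b n
      - (T (n + 1))ᴴ * transferBot T V w a b n := by
  rw [transferTop, transferProd_succ_mul_fromRows, toRows₁_fromRows]

lemma transferBot_succ (n : ℕ) :
    transferBot T V w a b (n + 1) = (T (n + 1))⁻¹ * transferTop T V w a b n := by
  rw [transferBot, transferProd_succ_mul_fromRows, toRows₂_fromRows]

lemma transferTop_eq (n : ℕ) :
    transferTop T V w a b n = blockA L n T V w * a + blockB L n T V w * b := by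
  rw [transferTop, ← fromBlocks_toBlocks (transferProd L n T V w), fromBlocks_mul_fromRows,
    toRows₁_fromRows]
  rfl

lemma transferBot_eq (n : ℕ) :
    transferBot T V w a b n = blockC L n T V w * a + blockD L n T V w * b := by
  rw [transferBot, ← fromBlocks_toBlocks (transferProd L n T V w), fromBlocks_mul_fromRows,
    toRows₂_fromRows]
  rfl

lemma transferBot_one (hT1 : T 1 = 1) : transferBot T V w a b 1 = a := by
  rw [transferBot_succ, transferTop_zero, hT1, inv_one, Matrix.one_mul]

lemma transferTop_eq_mul_transferBot_succ (n : ℕ) (hT : IsUnit (T (n + 1))) :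
    transferTop T V w a b n = T (n + 1) * transferBot T V w a b (n + 1) := by
  rw [transferBot_succ, ← Matrix.mul_assoc, mul_nonsing_inv _ ((isUnit_iff_isUnit_det _).1 hT),
    Matrix.one_mul]

lemma transfer_recurrence (n : ℕ) :
    (T (n + 1))ᴴ * transferBot T V w a b n + (V (n + 1) - w • 1) * transferBot T V w a b (n + 1)
      + transferTop T V w a b (n + 1) = 0 := by
  rw [transferTop_succ, transferBot_succ]
  simp only [Matrix.sub_mul, Matrix.mul_assoc]
  abel

end Transfer

section Solution

variable {L N : ℕ} (T V : ℕ → Mat L) (Zh Z : Mat L) (w : ℂ) {κ : Type*} (X R : Matrix (Fin L) κ ℂ)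

theorem jacobi_sub_smul_mul_blockCol_transferBot (hT1 : T 1 = 1)
    (hTinv : ∀ n, 2 ≤ n → n ≤ N → IsUnit (T n))
    (h : (blockA L N T V w + Z * blockC L N T V w - blockB L N T V w * Zh
        - Z * blockD L N T V w * Zh) * X = (blockB L N T V w + Z * blockD L N T V w) * R) :
    (jacobi L N T V Zh Z - w • 1) *
        blockCol (fun q : Fin N => transferBot T V w X (-R - Zh * X) (q + 1)) =
      blockCol (fun q : Fin N => if (q : ℕ) = 0 then R else 0) := by
  have hright : transferTop T V w X (-R - Zh * X) N =
      -(Z * transferBot T V w X (-R - Zh * X) N) := by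
    refine eq_neg_of_add_eq_zero_left ?_
    rw [transferTop_eq, transferBot_eq, ← sub_eq_zero.2 h]
    simp only [Matrix.mul_add, Matrix.add_mul, Matrix.mul_sub, Matrix.sub_mul, Matrix.mul_neg,
      Matrix.mul_assoc]
    abel
  have hψ₀ := transferBot_zero T V w X (-R - Zh * X)
  have hψ₁ := transferBot_one T V w X (-R - Zh * X) hT1
  set ψ := transferBot T V w X (-R - Zh * X)
  set φ := transferTop T V w X (-R - Zh * X)
  ext ⟨p, i⟩ j
  rw [mul_blockCol_apply, sum_comp_symm_jacobi_sub_smul_mul (ψ := ψ)]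
  have hlow : (if (p : ℕ) = 0 then -(Zh * ψ 1) else (T (p + 1))ᴴ * ψ p) =
      (T (p + 1))ᴴ * ψ p + if (p : ℕ) = 0 then R else 0 := by
    split_ifs with hp
    · rw [hp, zero_add, hT1, conjTranspose_one, Matrix.one_mul, hψ₀, hψ₁]
      abel
    · rw [add_zero]
  have hup : (if (p : ℕ) + 1 = N then -(Z * ψ N) else T (p + 2) * ψ (p + 2)) = φ (p + 1) := by
    split_ifs with hp
    · rw [hp, hright]
    · exact (transferTop_eq_mul_transferBot_succ _ _ _ _ _ (p + 1)
        (hTinv _ (by omega) (by omega))).symm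
  rw [hlow, hup, add_right_comm _ (ite _ _ _), add_right_comm _ (ite _ _ _),
    transfer_recurrence, zero_add]
  rfl

theorem eq_green_mul_of_mul_eq (hN : 0 < N) (hT1 : T 1 = 1)
    (hTinv : ∀ n, 2 ≤ n → n ≤ N → IsUnit (T n)) (hJ : IsUnit (jacobi L N T V Zh Z - w • 1))
    (h : (blockA L N T V w + Z * blockC L N T V w - blockB L N T V w * Zh
        - Z * blockD L N T V w * Zh) * X = (blockB L N T V w + Z * blockD L N T V w) * R) :
    X = green L N hN T V Zh Z w * R := by
  have hΨ := congrArg ((jacobi L N T V Zh Z - w • 1)⁻¹ * ·)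
    (jacobi_sub_smul_mul_blockCol_transferBot T V Zh Z w X R hT1 hTinv h)
  simp only [nonsing_inv_mul_cancel_left _ _ ((isUnit_iff_isUnit_det _).1 hJ)] at hΨ
  ext i j
  have := congrFun₂ hΨ (⟨0, hN⟩, i) j
  rw [mul_blockCol_apply, Finset.sum_eq_single ⟨0, hN⟩ (by simp_all [Fin.ext_iff]) (by simp)]
    at this
  simp only [blockCol, of_apply, transferBot_one _ _ _ _ _ hT1] at this
  exact this

end Solution

lemma green_eq_conjTranspose_green_conj {L N : ℕ} (hN : 0 < N) (T V : ℕ → Mat L) (Zh Z : Mat L)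
    (hH : (jacobi L N T V Zh Z).IsHermitian) (z : ℂ) :
    green L N hN T V Zh Z z = (green L N hN T V Zh Z (starRingEnd ℂ z))ᴴ := by
  have hconj : jacobi L N T V Zh Z - z • 1 = (jacobi L N T V Zh Z - starRingEnd ℂ z • 1)ᴴ := by
    simp [conjTranspose_sub, hH.eq]
  ext i j
  simp only [green, of_apply, conjTranspose_apply]
  rw [hconj, ← conjTranspose_nonsing_inv, conjTranspose_apply]

theorem stmt1_general (L N : ℕ) (hN : 1 ≤ N)
    (T V : ℕ → Mat L) (hT1 : T 1 = 1)
    (hTinv : ∀ n, 2 ≤ n → n ≤ N → IsUnit (T n))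
    (hV : ∀ n, 1 ≤ n → n ≤ N → (V n).IsHermitian)
    (Zh Z : Mat L) (hZh : Zh.IsHermitian) (hZ : Z.IsHermitian)
    (z : ℂ) (hz : 0 < z.im) :
    IsUnit (blockA L N T V (starRingEnd ℂ z) + Z * blockC L N T V (starRingEnd ℂ z)
      - blockB L N T V (starRingEnd ℂ z) * Zh - Z * blockD L N T V (starRingEnd ℂ z) * Zh) ∧
    green L N hN T V Zh Z z =
      ((blockA L N T V (starRingEnd ℂ z) + Z * blockC L N T V (starRingEnd ℂ z)
        - blockB L N T V (starRingEnd ℂ z) * Zh - Z * blockD L N T V (starRingEnd ℂ z) * Zh)⁻¹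
        * (blockB L N T V (starRingEnd ℂ z) + Z * blockD L N T V (starRingEnd ℂ z)))ᴴ := by
  set w := starRingEnd ℂ z
  set M := blockA L N T V w + Z * blockC L N T V w - blockB L N T V w * Zh
    - Z * blockD L N T V w * Zh
  set K := blockB L N T V w + Z * blockD L N T V w
  have hH := jacobi_isHermitian T V Zh Z hV hZh hZ
  have hJ : IsUnit (jacobi L N T V Zh Z - w • 1) :=
    hH.isUnit_sub_smul_one (by simpa [w] using hz.ne')
  have hM : IsUnit M := isUnit_of_mulVec_eq_zero fun v hv => by
    have hv' : M * replicateCol Unit v = K * (0 : Matrix (Fin L) Unit ℂ) := by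
      rw [← replicateCol_mulVec, hv, replicateCol_zero, Matrix.mul_zero]
    simpa using eq_green_mul_of_mul_eq T V Zh Z w _ _ hN hT1 hTinv hJ hv'
  have hG : M⁻¹ * K = green L N hN T V Zh Z w * 1 :=
    eq_green_mul_of_mul_eq T V Zh Z w _ _ hN hT1 hTinv hJ
      (by rw [mul_nonsing_inv_cancel_left _ _ ((isUnit_iff_isUnit_det _).1 hM), Matrix.mul_one])
  rw [green_eq_conjTranspose_green_conj hN T V Zh Z hH z, hG, Matrix.mul_one]
  exact ⟨hM, rfl⟩

theorem stmt1 (L N : ℕ) (hL : 1 ≤ L) (hN : 1 ≤ N)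
    (T V : ℕ → Mat L) (hT1 : T 1 = 1)
    (hTinv : ∀ n, 2 ≤ n → n ≤ N → IsUnit (T n))
    (hV : ∀ n, 1 ≤ n → n ≤ N → (V n).IsHermitian)
    (Zh Z : Mat L) (hZh : Zh.IsHermitian) (hZ : Z.IsHermitian)
    (z : ℂ) (hz : 0 < z.im) :
    IsUnit (blockA L N T V (starRingEnd ℂ z) + Z * blockC L N T V (starRingEnd ℂ z)
      - blockB L N T V (starRingEnd ℂ z) * Zh - Z * blockD L N T V (starRingEnd ℂ z) * Zh) ∧
    green L N hN T V Zh Z z =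
      ((blockA L N T V (starRingEnd ℂ z) + Z * blockC L N T V (starRingEnd ℂ z)
        - blockB L N T V (starRingEnd ℂ z) * Zh - Z * blockD L N T V (starRingEnd ℂ z) * Zh)⁻¹
        * (blockB L N T V (starRingEnd ℂ z) + Z * blockD L N T V (starRingEnd ℂ z)))ᴴ :=
  stmt1_general L N hN T V hT1 hTinv hV Zh Z hZh hZ z hz
end
end

section
/- The map Π induces a bijection from equivalence classes of Lagrangian frames onto the unitary group U(L): (i) for any two Lagrangian frames Φ and Ψ, Π(Φ) = Π(Ψ) if and only if there exists an invertible complex L×L matrix c with Φ = Ψ c; and (ii) for every unitary L×L matrix U there exists a Lagrangian frame Φ with Π(Φ) = U. -/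
open MeasureTheory Matrix
open scoped ComplexOrder

noncomputable section

/-- The symplectic form `J = [[0, −1], [1, 0]]` in `L × L` blocks. -/
def symJ (L : ℕ) : Matrix (Fin L ⊕ Fin L) (Fin L ⊕ Fin L) ℂ := Matrix.fromBlocks 0 (-1) 1 0

/-- Top `L × L` block of a `2L × L` matrix. -/
def topBlk (L : ℕ) (Φ : Matrix (Fin L ⊕ Fin L) (Fin L) ℂ) : Mat L :=
  Matrix.of fun i j => Φ (Sum.inl i) j

/-- Bottom `L × L` block of a `2L × L` matrix. -/
def botBlk (L : ℕ) (Φ : Matrix (Fin L ⊕ Fin L) (Fin L) ℂ) : Mat L :=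
  Matrix.of fun i j => Φ (Sum.inr i) j

/-- A Lagrangian frame: a `2L × L` matrix of maximal rank `L` with `Φ^* J Φ = 0`. -/
def IsLagFrame (L : ℕ) (Φ : Matrix (Fin L ⊕ Fin L) (Fin L) ℂ) : Prop :=
  Φ.rank = L ∧ Φᴴ * symJ L * Φ = 0

/-- The stereographic map `Π(Φ) = (a − i b)(a + i b)⁻¹` for `Φ = (a; b)`. -/
def PiMap (L : ℕ) (Φ : Matrix (Fin L ⊕ Fin L) (Fin L) ℂ) : Mat L :=
  (topBlk L Φ - Complex.I • botBlk L Φ) * (topBlk L Φ + Complex.I • botBlk L Φ)⁻¹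

/-!
For a frame `Φ = (a; b)` put `P = a + i b` and `N = a - i b`, so that `Π(Φ) = N P⁻¹`. The map
`Φ ↦ (P, N)` is a linear bijection onto pairs of `L × L` matrices commuting with right
multiplication, and in these coordinates `Φ^* J Φ = (i/2)(P^* P - N^* N)` and
`Φ^* Φ = (P^* P + N^* N)/2`. Hence `Φ` is a Lagrangian frame iff `P` is invertible and
`P^* P = N^* N`. If `Π(Φ) = Π(Ψ)`, then `c = P_Ψ⁻¹ P_Φ` matches both coordinates of `Φ` and `Ψ c`;
for unitary `U`, the pair `(P, N) = (1, U)` is a Lagrangian frame with `Π = U`.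
-/

namespace Matrix

variable {m n K : Type*} [Fintype m] [Fintype n] [DecidableEq n]

theorem isUnit_of_rank_eq_card [Field K] {A : Matrix n n K}
    (h : A.rank = Fintype.card n) : IsUnit A := by
  rw [← mulVec_surjective_iff_isUnit, ← coe_mulVecLin, ← LinearMap.range_eq_top]
  exact Submodule.eq_top_of_finrank_eq (by rw [← rank, h, Module.finrank_fintype_fun_eq_card])

theorem rank_eq_card_iff_isUnit_conjTranspose_mul_self [Field K] [PartialOrder K]
    [StarRing K] [StarOrderedRing K] (A : Matrix m n K) :
    A.rank = Fintype.card n ↔ IsUnit (Aᴴ * A) := by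
  rw [← rank_conjTranspose_mul_self]
  exact ⟨isUnit_of_rank_eq_card, rank_of_isUnit _⟩

theorem isUnit_conjTranspose_mul_self_iff [CommRing K] [StarRing K] (A : Matrix n n K) :
    IsUnit (Aᴴ * A) ↔ IsUnit A := by
  simp only [isUnit_iff_isUnit_det, det_conjTranspose, IsUnit.mul_iff, isUnit_star, and_self]

end Matrix

section Frames

variable (L : ℕ)

def plusBlk (Φ : Matrix (Fin L ⊕ Fin L) (Fin L) ℂ) : Mat L :=
  topBlk L Φ + Complex.I • botBlk L Φ

def minusBlk (Φ : Matrix (Fin L ⊕ Fin L) (Fin L) ℂ) : Mat L :=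
  topBlk L Φ - Complex.I • botBlk L Φ

def frameOfBlks (P N : Mat L) : Matrix (Fin L ⊕ Fin L) (Fin L) ℂ :=
  fromRows ((2⁻¹ : ℂ) • (P + N)) ((Complex.I / 2) • (N - P))

variable {L}

theorem PiMap_eq (Φ : Matrix (Fin L ⊕ Fin L) (Fin L) ℂ) :
    PiMap L Φ = minusBlk L Φ * (plusBlk L Φ)⁻¹ := rfl

theorem fromRows_topBlk_botBlk (Φ : Matrix (Fin L ⊕ Fin L) (Fin L) ℂ) :
    fromRows (topBlk L Φ) (botBlk L Φ) = Φ := by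
  ext (i | i) j <;> rfl

theorem topBlk_mul (Ψ : Matrix (Fin L ⊕ Fin L) (Fin L) ℂ) (c : Mat L) :
    topBlk L (Ψ * c) = topBlk L Ψ * c := by
  ext i j; simp [topBlk, Matrix.mul_apply]

theorem botBlk_mul (Ψ : Matrix (Fin L ⊕ Fin L) (Fin L) ℂ) (c : Mat L) :
    botBlk L (Ψ * c) = botBlk L Ψ * c := by
  ext i j; simp [botBlk, Matrix.mul_apply]

theorem plusBlk_mul (Ψ : Matrix (Fin L ⊕ Fin L) (Fin L) ℂ) (c : Mat L) :
    plusBlk L (Ψ * c) = plusBlk L Ψ * c := by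
  rw [plusBlk, plusBlk, topBlk_mul, botBlk_mul, Matrix.add_mul, Matrix.smul_mul]

theorem minusBlk_mul (Ψ : Matrix (Fin L ⊕ Fin L) (Fin L) ℂ) (c : Mat L) :
    minusBlk L (Ψ * c) = minusBlk L Ψ * c := by
  rw [minusBlk, minusBlk, topBlk_mul, botBlk_mul, Matrix.sub_mul, Matrix.smul_mul]

theorem plusBlk_frameOfBlks (P N : Mat L) : plusBlk L (frameOfBlks L P N) = P := by
  change (2⁻¹ : ℂ) • (P + N) + Complex.I • (Complex.I / 2) • (N - P) = P
  match_scalars <;> grind [Complex.I_sq]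

theorem minusBlk_frameOfBlks (P N : Mat L) : minusBlk L (frameOfBlks L P N) = N := by
  change (2⁻¹ : ℂ) • (P + N) - Complex.I • (Complex.I / 2) • (N - P) = N
  match_scalars <;> grind [Complex.I_sq]

theorem frameOfBlks_plusBlk_minusBlk (Φ : Matrix (Fin L ⊕ Fin L) (Fin L) ℂ) :
    frameOfBlks L (plusBlk L Φ) (minusBlk L Φ) = Φ := by
  conv_rhs => rw [← fromRows_topBlk_botBlk Φ]
  rw [frameOfBlks, plusBlk, minusBlk, fromRows_inj.eq_iff]
  constructor
  · module
  · match_scalars <;> grind [Complex.I_sq]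

theorem conjTranspose_frameOfBlks_mul_self (P N : Mat L) :
    (frameOfBlks L P N)ᴴ * frameOfBlks L P N = (2⁻¹ : ℂ) • (Pᴴ * P + Nᴴ * N) := by
  simp only [frameOfBlks, conjTranspose_fromRows_eq_fromCols_conjTranspose, fromCols_mul_fromRows,
    conjTranspose_smul, conjTranspose_add, conjTranspose_sub, Matrix.smul_mul, Matrix.mul_smul,
    Matrix.add_mul, Matrix.mul_add, Matrix.sub_mul, Matrix.mul_sub, Complex.star_def, map_div₀,
    map_inv₀, map_ofNat, Complex.conj_I]
  match_scalars <;> grind [Complex.I_sq]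

theorem conjTranspose_frameOfBlks_mul_symJ_mul (P N : Mat L) :
    (frameOfBlks L P N)ᴴ * symJ L * frameOfBlks L P N = (Complex.I / 2) • (Pᴴ * P - Nᴴ * N) := by
  simp only [frameOfBlks, symJ, conjTranspose_fromRows_eq_fromCols_conjTranspose,
    fromCols_mul_fromBlocks, fromCols_mul_fromRows, conjTranspose_smul, conjTranspose_add,
    conjTranspose_sub, Matrix.smul_mul, Matrix.mul_smul,
    Matrix.add_mul, Matrix.mul_add, Matrix.sub_mul, Matrix.mul_sub, Matrix.mul_zero,
    Matrix.zero_mul, Matrix.mul_one, Matrix.mul_neg, Matrix.neg_mul, Complex.star_def, map_div₀,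
    map_inv₀, map_ofNat, Complex.conj_I]
  match_scalars <;> grind [Complex.I_sq]

theorem isLagFrame_frameOfBlks_iff (P N : Mat L) :
    IsLagFrame L (frameOfBlks L P N) ↔ IsUnit P ∧ Pᴴ * P = Nᴴ * N := by
  have hJ : (frameOfBlks L P N)ᴴ * symJ L * frameOfBlks L P N = 0 ↔ Pᴴ * P = Nᴴ * N := by
    rw [conjTranspose_frameOfBlks_mul_symJ_mul, smul_eq_zero, sub_eq_zero]
    simp [Complex.I_ne_zero]
  rw [IsLagFrame, hJ]
  refine and_congr_left fun h => ?_
  have hgram : (frameOfBlks L P N)ᴴ * frameOfBlks L P N = Pᴴ * P := by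
    rw [conjTranspose_frameOfBlks_mul_self, ← h]
    module
  rw [← isUnit_conjTranspose_mul_self_iff, ← hgram,
    ← rank_eq_card_iff_isUnit_conjTranspose_mul_self, Fintype.card_fin]

theorem isLagFrame_iff (Φ : Matrix (Fin L ⊕ Fin L) (Fin L) ℂ) :
    IsLagFrame L Φ ↔
      IsUnit (plusBlk L Φ) ∧ (plusBlk L Φ)ᴴ * plusBlk L Φ = (minusBlk L Φ)ᴴ * minusBlk L Φ := by
  rw [← isLagFrame_frameOfBlks_iff, frameOfBlks_plusBlk_minusBlk]

theorem PiMap_frameOfBlks (P N : Mat L) : PiMap L (frameOfBlks L P N) = N * P⁻¹ := by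
  rw [PiMap_eq, plusBlk_frameOfBlks, minusBlk_frameOfBlks]

theorem PiMap_mul_of_isUnit (Ψ : Matrix (Fin L ⊕ Fin L) (Fin L) ℂ) {c : Mat L} (hc : IsUnit c) :
    PiMap L (Ψ * c) = PiMap L Ψ := by
  rw [PiMap_eq, PiMap_eq, plusBlk_mul, minusBlk_mul, Matrix.mul_inv_rev, Matrix.mul_assoc,
    ← Matrix.mul_assoc c, Matrix.mul_nonsing_inv _ ((isUnit_iff_isUnit_det c).mp hc),
    Matrix.one_mul]

theorem exists_eq_mul_of_PiMap_eq {Φ Ψ : Matrix (Fin L ⊕ Fin L) (Fin L) ℂ} (hΦ : IsLagFrame L Φ)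
    (hΨ : IsLagFrame L Ψ) (h : PiMap L Φ = PiMap L Ψ) :
    ∃ c : Mat L, IsUnit c ∧ Φ = Ψ * c := by
  obtain ⟨hPΦ, -⟩ := (isLagFrame_iff Φ).mp hΦ
  obtain ⟨hPΨ, -⟩ := (isLagFrame_iff Ψ).mp hΨ
  set c := (plusBlk L Ψ)⁻¹ * plusBlk L Φ
  have hplus : plusBlk L Φ = plusBlk L (Ψ * c) := by
    rw [plusBlk_mul, Matrix.mul_nonsing_inv_cancel_left _ _ ((isUnit_iff_isUnit_det _).mp hPΨ)]
  have hminus : minusBlk L Φ = minusBlk L (Ψ * c) := by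
    rw [minusBlk_mul, ← Matrix.mul_assoc, ← PiMap_eq, ← h, PiMap_eq,
      Matrix.nonsing_inv_mul_cancel_right _ _ ((isUnit_iff_isUnit_det _).mp hPΦ)]
  refine ⟨c, (Matrix.isUnit_nonsing_inv_iff.mpr hPΨ).mul hPΦ, ?_⟩
  rw [← frameOfBlks_plusBlk_minusBlk Φ, ← frameOfBlks_plusBlk_minusBlk (Ψ * c), hplus, hminus]

end Frames

theorem stmt3_general (L : ℕ) :
    (∀ Φ Ψ : Matrix (Fin L ⊕ Fin L) (Fin L) ℂ, IsLagFrame L Φ → IsLagFrame L Ψ →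
      (PiMap L Φ = PiMap L Ψ ↔ ∃ c : Mat L, IsUnit c ∧ Φ = Ψ * c)) ∧
    (∀ U ∈ Matrix.unitaryGroup (Fin L) ℂ,
      ∃ Φ : Matrix (Fin L ⊕ Fin L) (Fin L) ℂ, IsLagFrame L Φ ∧ PiMap L Φ = U) := by
  refine ⟨fun Φ Ψ hΦ hΨ => ⟨exists_eq_mul_of_PiMap_eq hΦ hΨ, ?_⟩, fun U hU => ?_⟩
  · rintro ⟨c, hc, rfl⟩
    exact PiMap_mul_of_isUnit Ψ hc
  · refine ⟨frameOfBlks L 1 U, (isLagFrame_frameOfBlks_iff 1 U).mpr ⟨isUnit_one, ?_⟩, ?_⟩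
    · rw [conjTranspose_one, Matrix.one_mul, ← star_eq_conjTranspose, mem_unitaryGroup_iff'.mp hU]
    · rw [PiMap_frameOfBlks, inv_one, Matrix.mul_one]

theorem stmt3 (L : ℕ) (hL : 1 ≤ L) :
    (∀ Φ Ψ : Matrix (Fin L ⊕ Fin L) (Fin L) ℂ, IsLagFrame L Φ → IsLagFrame L Ψ →
      (PiMap L Φ = PiMap L Ψ ↔ ∃ c : Mat L, IsUnit c ∧ Φ = Ψ * c)) ∧
    (∀ U ∈ Matrix.unitaryGroup (Fin L) ℂ,
      ∃ Φ : Matrix (Fin L ⊕ Fin L) (Fin L) ℂ, IsLagFrame L Φ ∧ PiMap L Φ = U) :=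
  stmt3_general L

end
end

section
/- Let α be a Hermitian complex L×L matrix with α > 1 (i.e. α − 1 is positive definite). Then for every unitary L×L matrix U the matrix U + α is invertible, and ∫_{U(L)} (U + α)^{-1} U dU = 0 with respect to the normalized Haar measure on the unitary group U(L). -/
/-!
For `‖z‖ ≤ 1` and `U` unitary, `Re ⟪x, (z U + α) x⟫ ≥ Re ⟪x, (α - 1) x⟫ > 0` for `x ≠ 0`, so
`z U + α` is invertible, and `f_U(z) = ((z U + α)⁻¹ z U)ᵢⱼ` is holomorphic on a neighbourhood of
the closed unit disc with `f_U(0) = 0`; by the mean value property its average over the unit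
circle vanishes.
On the other hand, for `‖z‖ = 1` the scalar matrix `z • 1` is unitary, so left invariance of the
Haar measure gives `∫ f_U(z) dμ(U) = ∫ f_U(1) dμ(U)`. Averaging over the circle and exchanging the
two integrals shows that `∫ f_U(1) dμ(U) = 0`.
-/

open MeasureTheory Matrix
open scoped ComplexOrder

noncomputable section

instance (L : ℕ) : MeasurableSpace (Matrix.unitaryGroup (Fin L) ℂ) := borel _

open Real Set

theorem RCLike.mem_unitary_of_norm_eq_one {𝕜 : Type*} [RCLike 𝕜] {z : 𝕜} (hz : ‖z‖ = 1) :
    z ∈ unitary 𝕜 := by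
  rw [Unitary.mem_iff_star_mul_self, RCLike.star_def, RCLike.conj_mul, hz]
  simp

theorem circleAverage_integral_comm {X E : Type*} [TopologicalSpace X] [CompactSpace X]
    [MeasurableSpace X] [OpensMeasurableSpace X] {μ : Measure X} [IsFiniteMeasure μ]
    [NormedAddCommGroup E] [NormedSpace ℝ E] [CompleteSpace E] [SecondCountableTopology E]
    {F : ℂ → X → E} {c : ℂ} {R : ℝ}
    (hF : ContinuousOn (Function.uncurry F) (Metric.sphere c |R| ×ˢ univ)) :
    circleAverage (fun z ↦ ∫ x, F z x ∂μ) c R = ∫ x, circleAverage (fun z ↦ F z x) c R ∂μ := by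
  have hmem (p : ℝ × X) : (circleMap c R p.1, p.2) ∈ Metric.sphere c |R| ×ˢ univ :=
    ⟨circleMap_mem_sphere' c R p.1, trivial⟩
  have hcont : Continuous fun p : ℝ × X ↦ F (circleMap c R p.1) p.2 :=
    hF.comp_continuous (by fun_prop) hmem
  obtain ⟨C, hC⟩ := ((isCompact_sphere c |R|).prod isCompact_univ).exists_bound_of_continuousOn hF
  have hint : Integrable (Function.uncurry fun θ x ↦ F (circleMap c R θ) x)
      ((volume.restrict (Ioc 0 (2 * π))).prod μ) :=
    .of_bound hcont.aestronglyMeasurable C (ae_of_all _ fun p ↦ hC _ (hmem p))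
  simp only [circleAverage_def, intervalIntegral.integral_of_le two_pi_pos.le]
  rw [integral_integral_swap hint, integral_smul]

namespace Matrix

variable {n 𝕜 : Type*} [Fintype n] [DecidableEq n] [RCLike 𝕜]

theorem isCompact_unitaryGroup : IsCompact (unitaryGroup n 𝕜 : Set (Matrix n n 𝕜)) :=
  (isCompact_univ_pi fun _ ↦ isCompact_univ_pi fun _ ↦ isCompact_closedBall (0 : 𝕜) 1)
    |>.of_isClosed_subset (isClosed_unitary (R := Matrix n n 𝕜)) fun U hU i _ j _ ↦ by
      simpa using entry_norm_bound_of_unitary hU i j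

instance : CompactSpace (unitaryGroup n 𝕜) :=
  isCompact_iff_compactSpace.mp isCompact_unitaryGroup

theorem integral_unitary_smul_eq_self {E : Type*} [NormedAddCommGroup E] [NormedSpace ℝ E]
    [MeasurableSpace (unitaryGroup n 𝕜)] [MeasurableMul (unitaryGroup n 𝕜)]
    (μ : Measure (unitaryGroup n 𝕜)) [μ.IsMulLeftInvariant] {z : 𝕜} (hz : z ∈ unitary 𝕜)
    (f : Matrix n n 𝕜 → E) :
    ∫ U : unitaryGroup n 𝕜, f (z • (U : Matrix n n 𝕜)) ∂μ = ∫ U, f U ∂μ := by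
  have hmul (U : unitaryGroup n 𝕜) :
      (((⟨z, hz⟩ : unitary 𝕜) • 1 * U : unitaryGroup n 𝕜) : Matrix n n 𝕜) = z • U := by
    simp
  simp_rw [← hmul]
  exact integral_mul_left_eq_self (fun U : unitaryGroup n 𝕜 ↦ f U) _

theorem norm_star_dotProduct_mulVec_le_of_mem_unitaryGroup {U : Matrix n n 𝕜}
    (hU : U ∈ unitaryGroup n 𝕜) (x : n → 𝕜) :
    ‖star x ⬝ᵥ (U *ᵥ x)‖ ≤ RCLike.re (star x ⬝ᵥ x) := by
  set v : EuclideanSpace 𝕜 n := WithLp.toLp 2 x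
  have hUv : ‖toEuclideanCLM (𝕜 := 𝕜) U v‖ = ‖v‖ :=
    ContinuousLinearMap.norm_map_of_mem_unitary (Unitary.map_mem _ hU) v
  calc ‖star x ⬝ᵥ (U *ᵥ x)‖ = ‖inner 𝕜 v (toEuclideanCLM (𝕜 := 𝕜) U v)‖ := by
        rw [dotProduct_comm]; rfl
    _ ≤ ‖v‖ * ‖toEuclideanCLM (𝕜 := 𝕜) U v‖ := norm_inner_le_norm _ _
    _ = RCLike.re (star x ⬝ᵥ x) := by
        rw [hUv, ← sq, ← inner_self_eq_norm_sq (𝕜 := 𝕜), dotProduct_comm]; rfl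

theorem isUnit_of_forall_re_star_dotProduct_mulVec_pos {A : Matrix n n 𝕜}
    (hA : ∀ x ≠ 0, 0 < RCLike.re (star x ⬝ᵥ (A *ᵥ x))) : IsUnit A := by
  rw [isUnit_iff_isUnit_det, isUnit_iff_ne_zero, Ne, ← exists_mulVec_eq_zero_iff]
  rintro ⟨x, hx, hAx⟩
  simpa [hAx] using hA x hx

theorem isUnit_smul_add_of_posDef_sub_one {α U : Matrix n n 𝕜} (hα : (α - 1).PosDef)
    (hU : U ∈ unitaryGroup n 𝕜) {z : 𝕜} (hz : ‖z‖ ≤ 1) : IsUnit (z • U + α) := by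
  refine isUnit_of_forall_re_star_dotProduct_mulVec_pos fun x hx ↦ ?_
  have hpos : 0 < RCLike.re (star x ⬝ᵥ ((α - 1) *ᵥ x)) :=
    (RCLike.pos_iff.mp (hα.dotProduct_mulVec_pos hx)).1
  have hU : -RCLike.re (star x ⬝ᵥ x) ≤ RCLike.re (z * (star x ⬝ᵥ (U *ᵥ x))) := by
    refine neg_le_of_abs_le ((RCLike.abs_re_le_norm _).trans ?_)
    rw [norm_mul]
    exact (mul_le_of_le_one_left (norm_nonneg _) hz).trans
      (norm_star_dotProduct_mulVec_le_of_mem_unitaryGroup hU x)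
  have hsplit : star x ⬝ᵥ ((z • U + α) *ᵥ x) =
      z * (star x ⬝ᵥ (U *ᵥ x)) + star x ⬝ᵥ ((α - 1) *ᵥ x) + star x ⬝ᵥ x := by
    simp only [add_mulVec, smul_mulVec, sub_mulVec, one_mulVec, dotProduct_add, dotProduct_sub,
      dotProduct_smul, smul_eq_mul]
    ring
  rw [hsplit, map_add, map_add]
  linarith

section resolvent

variable {α : Matrix n n ℂ}

-- Any algebra norm on matrices would do; it is only needed to differentiate `Ring.inverse`.
attribute [local instance] Matrix.linftyOpNormedRing Matrix.linftyOpNormedAlgebra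

theorem differentiableAt_inv_smul_add_mul_smul_apply {q : ℂ × Matrix n n ℂ}
    (h : IsUnit (q.1 • q.2 + α)) (i j : n) :
    DifferentiableAt ℂ (fun p : ℂ × Matrix n n ℂ ↦ ((p.1 • p.2 + α)⁻¹ * (p.1 • p.2)) i j) q := by
  have hinv : DifferentiableAt ℂ
      (fun p : ℂ × Matrix n n ℂ ↦ Ring.inverse (p.1 • p.2 + α) * (p.1 • p.2)) q := by
    fun_prop (disch := exact h)
  simp_rw [nonsing_inv_eq_ringInverse]
  exact (entryLinearMap ℂ ℂ i j).toContinuousLinearMap.differentiableAt.comp q hinv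

theorem circleAverage_inv_smul_add_mul_smul_apply_eq_zero {U : Matrix n n ℂ} (hα : (α - 1).PosDef)
    (hU : U ∈ unitaryGroup n ℂ) (i j : n) :
    circleAverage (fun z ↦ ((z • U + α)⁻¹ * (z • U)) i j) 0 1 = 0 := by
  have hdiff : DifferentiableOn ℂ (fun z : ℂ ↦ ((z • U + α)⁻¹ * (z • U)) i j)
      (closure (Metric.ball 0 |1|)) := fun z hz ↦ by
    have hz : ‖z‖ ≤ 1 := by simpa [closure_ball] using hz
    have h := (differentiableAt_inv_smul_add_mul_smul_apply (q := (z, U))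
      (isUnit_smul_add_of_posDef_sub_one hα hU hz) i j).comp (f := fun w : ℂ ↦ (w, U)) z
      (differentiableAt_id.prodMk (differentiableAt_const U))
    exact h.differentiableWithinAt
  simpa using hdiff.diffContOnCl.circleAverage

end resolvent

end Matrix

instance (L : ℕ) : BorelSpace (Matrix.unitaryGroup (Fin L) ℂ) := ⟨rfl⟩

theorem stmt15_general (L : ℕ)
    (α : Mat L)
    (hα : (α - (1 : Mat L)).PosDef)
    (μ : Measure (Matrix.unitaryGroup (Fin L) ℂ))
    [μ.IsHaarMeasure] :
    (∀ U : Matrix.unitaryGroup (Fin L) ℂ, IsUnit ((U : Mat L) + α)) ∧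
    (∀ i j : Fin L,
      (∫ (U : Matrix.unitaryGroup (Fin L) ℂ),
          (((U : Mat L) + α)⁻¹ * (U : Mat L)) i j ∂μ) = (0 : Mat L) i j) := by
  have hunit {U : Mat L} (hU : U ∈ unitaryGroup (Fin L) ℂ) {z : ℂ} (hz : ‖z‖ ≤ 1) :=
    isUnit_smul_add_of_posDef_sub_one hα hU hz
  refine ⟨fun U ↦ by simpa using hunit U.2 norm_one.le, fun i j ↦ ?_⟩
  set F : ℂ → unitaryGroup (Fin L) ℂ → ℂ := fun z U ↦ ((z • (U : Mat L) + α)⁻¹ * (z • U)) i j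
  have hF : ContinuousOn (Function.uncurry F) (Metric.sphere 0 |1| ×ˢ univ) := fun q hq ↦ by
    have hq : ‖q.1‖ ≤ 1 := (by simpa using hq.1 : ‖q.1‖ = 1).le
    exact ((differentiableAt_inv_smul_add_mul_smul_apply (hunit q.2.2 hq) i j).continuousAt.comp
      (f := fun p : ℂ × unitaryGroup (Fin L) ℂ ↦ (p.1, (p.2 : Mat L)))
      (by fun_prop)).continuousWithinAt
  calc ∫ U, (((U : Mat L) + α)⁻¹ * U) i j ∂μ = circleAverage (fun z ↦ ∫ U, F z U ∂μ) 0 1 := by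
        refine (circleAverage_const_on_circle fun z hz ↦ ?_).symm
        have hz : z ∈ unitary ℂ := RCLike.mem_unitary_of_norm_eq_one (by simpa using hz)
        exact integral_unitary_smul_eq_self μ hz fun M ↦ ((M + α)⁻¹ * M) i j
    _ = ∫ U, circleAverage (fun z ↦ F z U) 0 1 ∂μ := circleAverage_integral_comm hF
    _ = 0 := by
        simp only [F, circleAverage_inv_smul_add_mul_smul_apply_eq_zero hα (Subtype.prop _),
          integral_zero]

theorem stmt15 (L : ℕ) (hL : 1 ≤ L)
    (α : Mat L) (hαherm : α.IsHermitian)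
    (hα : (α - (1 : Mat L)).PosDef)
    (μ : Measure (Matrix.unitaryGroup (Fin L) ℂ))
    [μ.IsHaarMeasure] [IsProbabilityMeasure μ] :
    (∀ U : Matrix.unitaryGroup (Fin L) ℂ, IsUnit ((U : Mat L) + α)) ∧
    (∀ i j : Fin L,
      (∫ (U : Matrix.unitaryGroup (Fin L) ℂ),
          (((U : Mat L) + α)⁻¹ * (U : Mat L)) i j ∂μ) = (0 : Mat L) i j) :=
  stmt15_general L α hα μ
end
end
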